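/- Let H(x) = tanh(x/√2), and let φ, ψ : ℝ × ℝ → ℝ be C² functions satisfying, for all (t,x), the linearized Bäcklund system for φ⁴: ∂_x φ − ∂_t ψ = −√2·H(x)·φ and ∂_t φ − ∂_x ψ = −√2·H(x)·ψ. Then ∂_t² φ + 𝓛_H φ = 0 and ∂_t² ψ + 𝓛̃_H ψ = 0, i.e., ∂_t² φ − ∂_x² φ + (−1 + 3H(x)²)·φ = 0 and ∂_t² ψ − ∂_x² ψ + (1 + H(x)²)·ψ = 0. -/

import Mathlib

/-!
Differentiating the first equation of the system in `x` and the second in `t` and subtracting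
eliminates `ψ` (the mixed partials of `ψ` cancel) and leaves a Klein–Gordon equation for `φ`
with potential `a² + a'`, where `a = -√2 H`. The system is invariant under
`(a, φ, ψ) ↦ (-a, ψ, φ)`, so `ψ` satisfies the same equation with potential `a² - a'`.
For the kink, `a² = 2H²` and `a' = -(1 - H²)`, which gives `-1 + 3H²` and `1 + H²`.
-/

/-- The φ⁴ kink. -/
noncomputable def phi4Kink (x : ℝ) : ℝ := Real.tanh (x / Real.sqrt 2)

open Function

theorem Real.hasDerivAt_tanh (x : ℝ) : HasDerivAt Real.tanh (1 - Real.tanh x ^ 2) x := by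
  have h := (Real.hasDerivAt_sinh x).div (Real.hasDerivAt_cosh x) (Real.cosh_pos x).ne'
  rw [show Real.sinh / Real.cosh = Real.tanh from
    funext fun y => (Real.tanh_eq_sinh_div_cosh y).symm] at h
  refine h.congr_deriv ?_
  rw [Real.tanh_eq_sinh_div_cosh]
  field_simp

theorem hasDerivAt_phi4Kink (x : ℝ) :
    HasDerivAt phi4Kink ((1 - phi4Kink x ^ 2) / Real.sqrt 2) x := by
  have h := (Real.hasDerivAt_tanh (x / Real.sqrt 2)).comp x ((hasDerivAt_id x).div_const _)
  refine h.congr_deriv ?_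
  simp only [phi4Kink]
  ring

noncomputable def partialT (u : ℝ → ℝ → ℝ) (t x : ℝ) : ℝ := deriv (fun t' => u t' x) t

noncomputable def partialX (u : ℝ → ℝ → ℝ) (t x : ℝ) : ℝ := deriv (fun x' => u t x') x

section PartialDerivatives

variable {u : ℝ → ℝ → ℝ} {t x : ℝ}

theorem HasFDerivAt.hasDerivAt_slice_t {L : ℝ × ℝ →L[ℝ] ℝ}
    (h : HasFDerivAt (uncurry u) L (t, x)) :
    HasDerivAt (fun t' => u t' x) (L (1, 0)) t :=
  h.comp_hasDerivAt_of_eq t ((hasDerivAt_id' t).prodMk (hasDerivAt_const t x)) rfl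

theorem HasFDerivAt.hasDerivAt_slice_x {L : ℝ × ℝ →L[ℝ] ℝ}
    (h : HasFDerivAt (uncurry u) L (t, x)) :
    HasDerivAt (fun x' => u t x') (L (0, 1)) x :=
  h.comp_hasDerivAt_of_eq x ((hasDerivAt_const x t).prodMk (hasDerivAt_id' x)) rfl

theorem Differentiable.hasDerivAt_partialT (hu : Differentiable ℝ (uncurry u)) :
    HasDerivAt (fun t' => u t' x) (partialT u t x) t :=
  (hu (t, x)).hasFDerivAt.hasDerivAt_slice_t.differentiableAt.hasDerivAt

theorem Differentiable.hasDerivAt_partialX (hu : Differentiable ℝ (uncurry u)) :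
    HasDerivAt (fun x' => u t x') (partialX u t x) x :=
  (hu (t, x)).hasFDerivAt.hasDerivAt_slice_x.differentiableAt.hasDerivAt

theorem ContDiff.hasFDerivAt_uncurry_partialT (hu : ContDiff ℝ 2 (uncurry u)) (p : ℝ × ℝ) :
    HasFDerivAt (uncurry (partialT u))
      ((ContinuousLinearMap.apply ℝ ℝ ((1 : ℝ), (0 : ℝ))).comp
        (fderiv ℝ (fderiv ℝ (uncurry u)) p)) p := by
  have hu₁ : Differentiable ℝ (uncurry u) := hu.differentiable two_ne_zero
  have hpartial : uncurry (partialT u) = fun q => fderiv ℝ (uncurry u) q (1, 0) :=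
    funext fun q => (hu₁ q).hasFDerivAt.hasDerivAt_slice_t.deriv
  have hD : DifferentiableAt ℝ (fderiv ℝ (uncurry u)) p :=
    (hu.fderiv_right (m := 1) le_rfl).differentiable one_ne_zero p
  rw [hpartial]
  exact (ContinuousLinearMap.apply ℝ ℝ _).hasFDerivAt.comp p hD.hasFDerivAt

theorem ContDiff.hasFDerivAt_uncurry_partialX (hu : ContDiff ℝ 2 (uncurry u)) (p : ℝ × ℝ) :
    HasFDerivAt (uncurry (partialX u))
      ((ContinuousLinearMap.apply ℝ ℝ ((0 : ℝ), (1 : ℝ))).comp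
        (fderiv ℝ (fderiv ℝ (uncurry u)) p)) p := by
  have hu₁ : Differentiable ℝ (uncurry u) := hu.differentiable two_ne_zero
  have hpartial : uncurry (partialX u) = fun q => fderiv ℝ (uncurry u) q (0, 1) :=
    funext fun q => (hu₁ q).hasFDerivAt.hasDerivAt_slice_x.deriv
  have hD : DifferentiableAt ℝ (fderiv ℝ (uncurry u)) p :=
    (hu.fderiv_right (m := 1) le_rfl).differentiable one_ne_zero p
  rw [hpartial]
  exact (ContinuousLinearMap.apply ℝ ℝ _).hasFDerivAt.comp p hD.hasFDerivAt

theorem ContDiff.differentiable_uncurry_partialT (hu : ContDiff ℝ 2 (uncurry u)) :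
    Differentiable ℝ (uncurry (partialT u)) :=
  fun p => (hu.hasFDerivAt_uncurry_partialT p).differentiableAt

theorem ContDiff.differentiable_uncurry_partialX (hu : ContDiff ℝ 2 (uncurry u)) :
    Differentiable ℝ (uncurry (partialX u)) :=
  fun p => (hu.hasFDerivAt_uncurry_partialX p).differentiableAt

theorem ContDiff.partialX_partialT (hu : ContDiff ℝ 2 (uncurry u)) :
    partialX (partialT u) t x = partialT (partialX u) t x := by
  rw [partialX, partialT, (hu.hasFDerivAt_uncurry_partialT (t, x)).hasDerivAt_slice_x.deriv,
    (hu.hasFDerivAt_uncurry_partialX (t, x)).hasDerivAt_slice_t.deriv]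
  exact hu.contDiffAt.isSymmSndFDerivAt (by simp) _ _

end PartialDerivatives

structure IsLinearBacklundPair (a : ℝ → ℝ) (φ ψ : ℝ → ℝ → ℝ) : Prop where
  fst : ∀ t x, partialX φ t x - partialT ψ t x = a x * φ t x
  snd : ∀ t x, partialT φ t x - partialX ψ t x = a x * ψ t x

namespace IsLinearBacklundPair

variable {a : ℝ → ℝ} {φ ψ : ℝ → ℝ → ℝ}

theorem swap (h : IsLinearBacklundPair a φ ψ) : IsLinearBacklundPair (-a) ψ φ where
  fst t x := by simp only [Pi.neg_apply]; linear_combination -h.snd t x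
  snd t x := by simp only [Pi.neg_apply]; linear_combination -h.fst t x

theorem wave_fst (h : IsLinearBacklundPair a φ ψ) (hφ : ContDiff ℝ 2 (uncurry φ))
    (hψ : ContDiff ℝ 2 (uncurry ψ)) (t : ℝ) {x : ℝ} (ha : DifferentiableAt ℝ a x) :
    partialT (partialT φ) t x - partialX (partialX φ) t x
      + (a x ^ 2 + deriv a x) * φ t x = 0 := by
  have hφ₁ : Differentiable ℝ (uncurry φ) := hφ.differentiable two_ne_zero
  have hψ₁ : Differentiable ℝ (uncurry ψ) := hψ.differentiable two_ne_zero
  have hsnd_t : partialT (partialT φ) t x - partialT (partialX ψ) t x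
      = a x * partialT ψ t x :=
    (hφ.differentiable_uncurry_partialT.hasDerivAt_partialT.sub
      hψ.differentiable_uncurry_partialX.hasDerivAt_partialT).unique
      ((hψ₁.hasDerivAt_partialT.const_mul (a x)).congr_of_eventuallyEq
        (.of_forall fun t' => h.snd t' x))
  have hfst_x : partialX (partialX φ) t x - partialX (partialT ψ) t x
      = deriv a x * φ t x + a x * partialX φ t x :=
    (hφ.differentiable_uncurry_partialX.hasDerivAt_partialX.sub
      hψ.differentiable_uncurry_partialT.hasDerivAt_partialX).unique
      ((ha.hasDerivAt.mul hφ₁.hasDerivAt_partialX).congr_of_eventuallyEq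
        (.of_forall fun x' => h.fst t x'))
  linear_combination hsnd_t - hfst_x - hψ.partialX_partialT - a x * h.fst t x

theorem wave_snd (h : IsLinearBacklundPair a φ ψ) (hφ : ContDiff ℝ 2 (uncurry φ))
    (hψ : ContDiff ℝ 2 (uncurry ψ)) (t : ℝ) {x : ℝ} (ha : DifferentiableAt ℝ a x) :
    partialT (partialT ψ) t x - partialX (partialX ψ) t x
      + (a x ^ 2 - deriv a x) * ψ t x = 0 := by
  have h' := h.swap.wave_fst hψ hφ t ha.neg
  rw [deriv.neg, Pi.neg_apply] at h'
  linear_combination h'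

end IsLinearBacklundPair

/-- Solutions of the linearized Bäcklund system for φ⁴ around the kink
H satisfy ∂ₜ²φ + 𝓛_H φ = 0 and ∂ₜ²ψ + 𝓛̃_H ψ = 0. -/
theorem linearized_backlund_phi4
    (φ ψ : ℝ → ℝ → ℝ)
    (hφ : ContDiff ℝ 2 (fun p : ℝ × ℝ => φ p.1 p.2))
    (hψ : ContDiff ℝ 2 (fun p : ℝ × ℝ => ψ p.1 p.2))
    (h1 : ∀ t x : ℝ,
      deriv (fun x' => φ t x') x - deriv (fun t' => ψ t' x) t
        = -Real.sqrt 2 * phi4Kink x * φ t x)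
    (h2 : ∀ t x : ℝ,
      deriv (fun t' => φ t' x) t - deriv (fun x' => ψ t x') x
        = -Real.sqrt 2 * phi4Kink x * ψ t x) :
    (∀ t x : ℝ,
      deriv (fun t' => deriv (fun t'' => φ t'' x) t') t
        - deriv (fun x' => deriv (fun x'' => φ t x'') x') x
        + (-1 + 3 * (phi4Kink x) ^ 2) * φ t x = 0)
    ∧ (∀ t x : ℝ,
      deriv (fun t' => deriv (fun t'' => ψ t'' x) t') t
        - deriv (fun x' => deriv (fun x'' => ψ t x'') x') x
        + (1 + (phi4Kink x) ^ 2) * ψ t x = 0) := by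
  set a : ℝ → ℝ := fun x => -Real.sqrt 2 * phi4Kink x
  have hpair : IsLinearBacklundPair a φ ψ := ⟨h1, h2⟩
  have ha (x : ℝ) : HasDerivAt a (-(1 - phi4Kink x ^ 2)) x := by
    refine ((hasDerivAt_phi4Kink x).const_mul (-Real.sqrt 2)).congr_deriv ?_
    field_simp
  have hsqrt : Real.sqrt 2 ^ 2 = 2 := Real.sq_sqrt zero_le_two
  refine ⟨fun t x => ?_, fun t x => ?_⟩
  · show partialT (partialT φ) t x - partialX (partialX φ) t x + _ = 0
    have hwave := hpair.wave_fst hφ hψ t (ha x).differentiableAt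
    rw [(ha x).deriv] at hwave
    linear_combination hwave - phi4Kink x ^ 2 * φ t x * hsqrt
  · show partialT (partialT ψ) t x - partialX (partialX ψ) t x + _ = 0
    have hwave := hpair.wave_snd hφ hψ t (ha x).differentiableAt
    rw [(ha x).deriv] at hwave
    linear_combination hwave - phi4Kink x ^ 2 * ψ t x * hsqrt
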